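/- For every n ≥ 4, the subgroup ⟨S_n({231, 312, 321, 1243})⟩ of S_n is isomorphic to the symmetric group S_4; indeed, S_n({231, 312, 321, 1243}) consists exactly of the identity and the permutations (1,2), (2,3), and (1,2)(3,4). -/

import Mathlib

/-!
Record a permutation of `Fin n` by its inversions, the pairs of positions `i < j` with
`π j < π i`; a permutation is determined by them. Avoiding 231, 312 and 321 says exactly that
every inversion is a pair of adjacent positions: a position strictly between the two would
complete one of these patterns. Given that, avoiding 1243 says that every pair of positions to
the left of an inversion is inverted too. As two adjacent inversions cannot share a position,
the only possible inversion sets are `∅`, `{(0,1)}`, `{(1,2)}` and `{(0,1),(2,3)}`: those of the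
four listed permutations, which are the images of permutations of `Fin 4` under the embedding
`Fin 4 ↪ Fin n`. Their preimages generate `S_4`, so the generated subgroup is the
(isomorphic) image of `S_4`.
-/

/-- A permutation `π ∈ S_n` contains the pattern `τ ∈ S_k` if there is a strictly
increasing `f : Fin k → Fin n` such that `τ a < τ b ↔ π (f a) < π (f b)`. -/
def PermContains {k n : ℕ} (τ : Equiv.Perm (Fin k)) (π : Equiv.Perm (Fin n)) : Prop :=
  ∃ f : Fin k → Fin n, StrictMono f ∧ ∀ a b : Fin k, τ a < τ b ↔ π (f a) < π (f b)

/-- `avoidSet n T` is `S_n(T)`: the permutations of `Fin n` avoiding every pattern in `T`,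
where `T` is a set of permutations of arbitrary lengths. -/
def avoidSet (n : ℕ) (T : Set (Σ k : ℕ, Equiv.Perm (Fin k))) : Set (Equiv.Perm (Fin n)) :=
  {π | ∀ τ ∈ T, ¬ PermContains τ.2 π}
def p231 : Equiv.Perm (Fin 3) := finRotate 3
def p312 : Equiv.Perm (Fin 3) := (finRotate 3)⁻¹
def p321 : Equiv.Perm (Fin 3) := Equiv.swap 0 2
/-- The pattern 1243. -/
def p1243 : Equiv.Perm (Fin 4) := Equiv.swap 2 3

open Equiv

variable {n : ℕ}

theorem permContains_iff {k : ℕ} {τ : Perm (Fin k)} {π : Perm (Fin n)} :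
    PermContains τ π ↔
      ∃ f : Fin k → Fin n, StrictMono f ∧ StrictMono (π ∘ f ∘ τ.symm) := by
  refine exists_congr fun f => and_congr_right fun _ => ⟨fun h u v huv => ?_, fun h a b => ?_⟩
  · simpa using (h (τ.symm u) (τ.symm v)).1 (by simpa using huv)
  · simpa using (h.lt_iff_lt (a := τ a) (b := τ b)).symm

section Patterns

variable {π : Perm (Fin n)} {a b c d : Fin n}

theorem permContains_p231 (hab : a < b) (hbc : b < c) (h₁ : π c < π a) (h₂ : π a < π b) :
    PermContains p231 π :=
  permContains_iff.2 ⟨![a, b, c],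
    by simp [Fin.strictMono_iff_lt_succ, Fin.forall_fin_succ, hab, hbc],
    by simp +decide [Fin.strictMono_iff_lt_succ, Fin.forall_fin_succ, p231, h₁, h₂]⟩

theorem permContains_p312 (hab : a < b) (hbc : b < c) (h₁ : π b < π c) (h₂ : π c < π a) :
    PermContains p312 π :=
  permContains_iff.2 ⟨![a, b, c],
    by simp [Fin.strictMono_iff_lt_succ, Fin.forall_fin_succ, hab, hbc],
    by simp +decide [Fin.strictMono_iff_lt_succ, Fin.forall_fin_succ, p312, Perm.inv_def,
      h₁, h₂]⟩

theorem permContains_p321 (hab : a < b) (hbc : b < c) (h₁ : π c < π b) (h₂ : π b < π a) :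
    PermContains p321 π :=
  permContains_iff.2 ⟨![a, b, c],
    by simp [Fin.strictMono_iff_lt_succ, Fin.forall_fin_succ, hab, hbc],
    by simp +decide [Fin.strictMono_iff_lt_succ, Fin.forall_fin_succ, p321, swap_apply_def,
      h₁, h₂]⟩

theorem permContains_p1243 (hab : a < b) (hbc : b < c) (hcd : c < d) (h₁ : π a < π b)
    (h₂ : π b < π d) (h₃ : π d < π c) : PermContains p1243 π :=
  permContains_iff.2 ⟨![a, b, c, d],
    by simp [Fin.strictMono_iff_lt_succ, Fin.forall_fin_succ, hab, hbc, hcd],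
    by simp +decide [Fin.strictMono_iff_lt_succ, Fin.forall_fin_succ, p1243, swap_apply_def,
      h₁, h₂, h₃]⟩

end Patterns

/-- Positions are recorded as natural numbers, so that inversion sets of permutations of
different `Fin m` can be compared. -/
def inversions {m : ℕ} (π : Perm (Fin m)) : Set (ℕ × ℕ) :=
  {p | ∃ i j : Fin m, i < j ∧ π j < π i ∧ ((i : ℕ), (j : ℕ)) = p}

section Inversions

variable {π σ : Perm (Fin n)} {i j : Fin n}

theorem mk_mem_inversions : ((i : ℕ), (j : ℕ)) ∈ inversions π ↔ i < j ∧ π j < π i := by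
  refine ⟨?_, fun h => ⟨i, j, h.1, h.2, rfl⟩⟩
  rintro ⟨i', j', hij, hπ, he⟩
  obtain ⟨rfl, rfl⟩ : i' = i ∧ j' = j := by simpa [Fin.ext_iff] using he
  exact ⟨hij, hπ⟩

theorem apply_lt_apply_of_notMem_inversions (hij : i < j)
    (h : ((i : ℕ), (j : ℕ)) ∉ inversions π) : π i < π j := by
  rw [mk_mem_inversions] at h
  exact lt_of_le_of_ne (not_lt.1 fun h' => h ⟨hij, h'⟩) (π.injective.ne hij.ne)

theorem mem_inversions_trans {a b c : ℕ} (hab : (a, b) ∈ inversions π)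
    (hbc : (b, c) ∈ inversions π) : (a, c) ∈ inversions π := by
  obtain ⟨i, j, hij, hji, he⟩ := hab
  obtain ⟨j', k, hjk, hkj, he'⟩ := hbc
  obtain rfl : j' = j := by
    simp only [Prod.mk.injEq] at he he'
    exact Fin.ext (he'.1.trans he.2.symm)
  exact ⟨i, k, hij.trans hjk, hkj.trans hji, by simp_all⟩

theorem inversions_injective : Function.Injective (inversions (m := n)) := by
  intro π σ h
  have hmono : StrictMono (π ∘ σ.symm) := by
    intro u v huv
    obtain ⟨i, rfl⟩ := σ.surjective u
    obtain ⟨j, rfl⟩ := σ.surjective v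
    simp only [Function.comp_apply, symm_apply_apply]
    rcases lt_trichotomy i j with hij | rfl | hji
    · exact apply_lt_apply_of_notMem_inversions hij fun hπ =>
        (mk_mem_inversions.1 (h ▸ hπ)).2.asymm huv
    · exact absurd huv (lt_irrefl _)
    · exact (mk_mem_inversions.1 (h ▸ mk_mem_inversions.2 ⟨hji, huv⟩)).2
  have hid : π ∘ σ.symm = id := (hmono.range_inj strictMono_id).1 (by
    rw [Set.range_id, Set.range_eq_univ]; exact π.surjective.comp σ.symm.surjective)
  exact Equiv.ext fun x => by simpa using congrFun hid (σ x)

end Inversions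

theorem PermContains.exists_inversions_iff {k : ℕ} {τ : Perm (Fin k)} {π : Perm (Fin n)}
    (h : PermContains τ π) :
    ∃ f : Fin k → Fin n, StrictMono f ∧ ∀ a b : Fin k,
      ((a : ℕ), (b : ℕ)) ∈ inversions τ ↔
        ((f a : ℕ), (f b : ℕ)) ∈ inversions π := by
  obtain ⟨f, hf, hord⟩ := h
  exact ⟨f, hf, fun a b => by simp only [mk_mem_inversions, hf.lt_iff_lt, hord]⟩

def AdjacentInversions {m : ℕ} (π : Perm (Fin m)) : Prop :=
  ∀ p ∈ inversions π, p.2 = p.1 + 1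

def InvertedBelowInversions {m : ℕ} (π : Perm (Fin m)) : Prop :=
  ∀ p ∈ inversions π, ∀ a b : ℕ, a < b → b < p.1 → (a, b) ∈ inversions π

section Avoidance

variable {π : Perm (Fin n)}

theorem AdjacentInversions.apply_lt_apply (hπ : AdjacentInversions π) {i j : Fin n}
    (hij : (i : ℕ) + 1 < j) : π i < π j :=
  apply_lt_apply_of_notMem_inversions (Fin.lt_def.2 (by omega)) fun h => by
    have : (j : ℕ) = i + 1 := hπ _ h
    omega

theorem AdjacentInversions.not_permContains {k : ℕ} (hπ : AdjacentInversions π)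
    {τ : Perm (Fin k)} {a b : Fin k} (hab : (a : ℕ) + 1 < b)
    (hτ : ((a : ℕ), (b : ℕ)) ∈ inversions τ) : ¬ PermContains τ π := by
  intro h
  obtain ⟨f, hf, hinv⟩ := h.exists_inversions_iff
  have hfab : (f b : ℕ) = f a + 1 := hπ _ ((hinv a b).1 hτ)
  have ham : a < ⟨a + 1, by omega⟩ := Fin.lt_def.2 (Nat.lt_succ_self a)
  have hmb : (⟨a + 1, by omega⟩ : Fin k) < b := Fin.lt_def.2 hab
  have := Fin.lt_def.1 (hf ham)
  have := Fin.lt_def.1 (hf hmb)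
  omega

theorem adjacentInversions_iff_avoids :
    AdjacentInversions π ↔
      ¬ PermContains p231 π ∧ ¬ PermContains p312 π ∧ ¬ PermContains p321 π := by
  constructor
  · intro hπ
    refine ⟨?_, ?_, ?_⟩ <;>
      exact hπ.not_permContains (a := 0) (b := 2) (by decide) (mk_mem_inversions.2 (by decide))
  rintro ⟨h231, h312, h321⟩ _ ⟨i, j, hij, hji, rfl⟩
  by_contra hne
  let m : Fin n := ⟨i + 1, by omega⟩
  have him : i < m := Fin.lt_def.2 (Nat.lt_succ_self i)
  have hmj : m < j := Fin.lt_def.2 (show i + 1 < (j : ℕ) by omega)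
  rcases lt_trichotomy (π m) (π j) with hmj' | hmj' | hjm
  · exact h312 (permContains_p312 him hmj hmj' hji)
  · exact hmj.ne (π.injective hmj')
  rcases lt_trichotomy (π m) (π i) with hmi | hmi | him'
  · exact h321 (permContains_p321 him hmj hjm hmi)
  · exact him.ne' (π.injective hmi)
  · exact h231 (permContains_p231 him hmj hji him')

theorem invertedBelowInversions_iff_avoids (hπ : AdjacentInversions π) :
    InvertedBelowInversions π ↔ ¬ PermContains p1243 π := by
  constructor
  · intro hbelow h
    obtain ⟨f, hf, hinv⟩ := h.exists_inversions_iff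
    have h01 := hbelow _ ((hinv 2 3).1 (mk_mem_inversions.2 (by decide))) (f 0) (f 1)
      (hf (by decide)) (hf (by decide))
    exact absurd (mk_mem_inversions.1 ((hinv 0 1).2 h01)) (by decide)
  · rintro h _ ⟨c, d, hcd, hdc, rfl⟩ a b hab hbc
    by_contra hnot
    have hd : (d : ℕ) = c + 1 := hπ _ (mk_mem_inversions.2 ⟨hcd, hdc⟩)
    let a' : Fin n := ⟨a, by omega⟩
    let b' : Fin n := ⟨b, by omega⟩
    have ha'b' : a' < b' := Fin.lt_def.2 hab
    exact h (permContains_p1243 ha'b' (Fin.lt_def.2 hbc) hcd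
      (apply_lt_apply_of_notMem_inversions ha'b' hnot)
      (hπ.apply_lt_apply (show b + 1 < (d : ℕ) by omega)) hdc)

end Avoidance

theorem inversions_eq_of_adjacentInversions {π : Perm (Fin n)} (hadj : AdjacentInversions π)
    (hbelow : InvertedBelowInversions π) :
    inversions π = ∅ ∨ inversions π = {(0, 1)} ∨ inversions π = {(1, 2)} ∨
      inversions π = {(0, 1), (2, 3)} := by
  have hsub : ∀ p ∈ inversions π, p = (0, 1) ∨ p = (1, 2) ∨ p = (2, 3) := by
    rintro ⟨c, d⟩ hp
    obtain rfl : d = c + 1 := hadj _ hp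
    have hc : c < 3 := by
      by_contra! hc
      exact absurd (hadj _ (hbelow _ hp 0 2 two_pos (show 2 < c by omega))) (by decide)
    interval_cases c <;> simp
  have h23_01 : (2, 3) ∈ inversions π → (0, 1) ∈ inversions π :=
    fun h => hbelow _ h 0 1 one_pos (by norm_num)
  have h01_12 : (0, 1) ∈ inversions π → (1, 2) ∉ inversions π := fun h h' =>
    absurd (hadj _ (mem_inversions_trans h h')) (by decide)
  have hext : ∀ S : Set (ℕ × ℕ), S ⊆ {(0, 1), (1, 2), (2, 3)} →
      (∀ p ∈ ({(0, 1), (1, 2), (2, 3)} : Set (ℕ × ℕ)), p ∈ inversions π ↔ p ∈ S) →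
      inversions π = S := fun S hS hmem => Set.ext fun p =>
    ⟨fun hp => (hmem p (hsub p hp)).1 hp, fun hp => (hmem p (hS hp)).2 hp⟩
  by_cases h01 : (0, 1) ∈ inversions π
  · have h12 := h01_12 h01
    by_cases h23 : (2, 3) ∈ inversions π
    · exact .inr (.inr (.inr
        (hext _ (by simp [Set.insert_subset_iff]) (by simp [h01, h12, h23]))))
    · exact .inr (.inl (hext _ (by simp) (by simp [h01, h12, h23])))
  · have h23 := mt h23_01 h01
    by_cases h12 : (1, 2) ∈ inversions π
    · exact .inr (.inr (.inl (hext _ (by simp) (by simp [h01, h12, h23]))))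
    · exact .inl (hext _ (by simp) (by simp [h01, h12, h23]))

theorem mem_avoidSet_iff {π : Perm (Fin n)} :
    π ∈ avoidSet n {⟨3, p231⟩, ⟨3, p312⟩, ⟨3, p321⟩, ⟨4, p1243⟩} ↔
      AdjacentInversions π ∧ InvertedBelowInversions π := by
  simp only [avoidSet, Set.mem_ofPred_eq, Set.forall_mem_insert, Set.mem_singleton_iff,
    forall_eq]
  refine ⟨fun ⟨h231, h312, h321, h1243⟩ => ?_, fun ⟨hadj, hbelow⟩ => ?_⟩
  · have hadj := adjacentInversions_iff_avoids.2 ⟨h231, h312, h321⟩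
    exact ⟨hadj, (invertedBelowInversions_iff_avoids hadj).2 h1243⟩
  · obtain ⟨h231, h312, h321⟩ := adjacentInversions_iff_avoids.1 hadj
    exact ⟨h231, h312, h321, (invertedBelowInversions_iff_avoids hadj).1 hbelow⟩

theorem inversions_eq_coe_image {k : ℕ} (τ : Perm (Fin k)) : inversions τ =
    ((Finset.univ.filter fun p : Fin k × Fin k => p.1 < p.2 ∧ τ p.2 < τ p.1).image
      fun p => ((p.1 : ℕ), (p.2 : ℕ)) : Finset (ℕ × ℕ)) := by
  ext p
  simp [inversions, and_assoc]

theorem inversions_one {k : ℕ} : inversions (1 : Perm (Fin k)) = ∅ :=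
  Set.eq_empty_of_forall_notMem fun _ ⟨_, _, hij, hji, _⟩ => hij.asymm hji

theorem inversions_swap_zero_one : inversions (swap 0 1 : Perm (Fin 4)) = {(0, 1)} := by
  rw [inversions_eq_coe_image, ← Finset.coe_singleton, Finset.coe_inj]
  decide

theorem inversions_swap_one_two : inversions (swap 1 2 : Perm (Fin 4)) = {(1, 2)} := by
  rw [inversions_eq_coe_image, ← Finset.coe_singleton, Finset.coe_inj]
  decide

theorem inversions_swap_zero_one_mul_swap_two_three :
    inversions (swap 0 1 * swap 2 3 : Perm (Fin 4)) = {(0, 1), (2, 3)} := by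
  rw [inversions_eq_coe_image, ← Finset.coe_pair, Finset.coe_inj]
  decide

theorem Equiv.Perm.viaEmbeddingHom_swap {α β : Type*} [DecidableEq α] [DecidableEq β]
    (ι : α ↪ β) (a b : α) :
    Perm.viaEmbeddingHom ι (swap a b) = swap (ι a) (ι b) := by
  ext x
  rw [Perm.viaEmbeddingHom_apply]
  by_cases hx : x ∈ Set.range ι
  · obtain ⟨y, rfl⟩ := hx
    rw [Perm.viaEmbedding_apply, ι.injective.swap_apply]
  · rw [Perm.viaEmbedding_apply_of_notMem _ _ x hx, swap_apply_of_ne_of_ne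
      (fun h => hx ⟨a, h.symm⟩) (fun h => hx ⟨b, h.symm⟩)]

theorem val_viaEmbedding_castLEEmb {k : ℕ} (h : k ≤ n) (τ : Perm (Fin k)) (x : Fin n) :
    (τ.viaEmbedding (Fin.castLEEmb h) x : ℕ) =
      if hx : (x : ℕ) < k then (τ ⟨x, hx⟩ : ℕ) else x := by
  split_ifs with hx
  · change (τ.viaEmbedding (Fin.castLEEmb h) (Fin.castLEEmb h ⟨x, hx⟩) : ℕ) = _
    rw [Perm.viaEmbedding_apply]
    rfl
  · rw [Perm.viaEmbedding_apply_of_notMem]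
    rintro ⟨y, rfl⟩
    exact hx y.isLt

theorem inversions_viaEmbedding_castLEEmb {k : ℕ} (h : k ≤ n) (τ : Perm (Fin k)) :
    inversions (τ.viaEmbedding (Fin.castLEEmb h)) = inversions τ := by
  ext p
  constructor
  · rintro ⟨i, j, hij, hji, rfl⟩
    rw [Fin.lt_def, val_viaEmbedding_castLEEmb, val_viaEmbedding_castLEEmb] at hji
    have hij' := Fin.lt_def.1 hij
    split_ifs at hji with hj hi hi
    · exact ⟨⟨i, hi⟩, ⟨j, hj⟩, hij', hji, rfl⟩
    all_goals omega
  · rintro ⟨i, j, hij, hji, rfl⟩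
    refine ⟨Fin.castLE h i, Fin.castLE h j, hij, ?_, rfl⟩
    rw [Fin.lt_def, val_viaEmbedding_castLEEmb, val_viaEmbedding_castLEEmb]
    simpa using hji

theorem avoidSet_eq_image_viaEmbeddingHom (h : 4 ≤ n) :
    avoidSet n {⟨3, p231⟩, ⟨3, p312⟩, ⟨3, p321⟩, ⟨4, p1243⟩} =
      Perm.viaEmbeddingHom (Fin.castLEEmb h) ''
        {1, swap 0 1, swap 1 2, swap 0 1 * swap 2 3} := by
  have hinv (τ : Perm (Fin 4)) :
      inversions (Perm.viaEmbeddingHom (Fin.castLEEmb h) τ) = inversions τ :=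
    inversions_viaEmbedding_castLEEmb h τ
  ext π
  rw [mem_avoidSet_iff]
  constructor
  · rintro ⟨hadj, hbelow⟩
    suffices ∃ τ ∈ ({1, swap 0 1, swap 1 2, swap 0 1 * swap 2 3} : Set (Perm (Fin 4))),
        inversions π = inversions τ by
      obtain ⟨τ, hτ, he⟩ := this
      exact ⟨τ, hτ, inversions_injective (by rw [hinv, he])⟩
    rcases inversions_eq_of_adjacentInversions hadj hbelow with he | he | he | he
    · exact ⟨1, by simp, he.trans inversions_one.symm⟩
    · exact ⟨swap 0 1, by simp, he.trans inversions_swap_zero_one.symm⟩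
    · exact ⟨swap 1 2, by simp, he.trans inversions_swap_one_two.symm⟩
    · exact ⟨swap 0 1 * swap 2 3, by simp,
        he.trans inversions_swap_zero_one_mul_swap_two_three.symm⟩
  · rintro ⟨τ, hτ, rfl⟩
    simp only [AdjacentInversions, InvertedBelowInversions, hinv]
    rcases hτ with rfl | rfl | rfl | rfl <;>
      simp only [inversions_one, inversions_swap_zero_one, inversions_swap_one_two,
        inversions_swap_zero_one_mul_swap_two_three] <;>
      simp <;> omega

theorem closure_swaps_fin_four_eq_top :
    Subgroup.closure ({1, swap 0 1, swap 1 2, swap 0 1 * swap 2 3} : Set (Perm (Fin 4))) = ⊤ := by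
  set H := Subgroup.closure ({1, swap 0 1, swap 1 2, swap 0 1 * swap 2 3} : Set (Perm (Fin 4)))
  have h01 : swap 0 1 ∈ H := Subgroup.subset_closure (by simp)
  have h12 : swap 1 2 ∈ H := Subgroup.subset_closure (by simp)
  have h23 : swap 2 3 ∈ H := by
    have h0123 : swap 0 1 * swap 2 3 ∈ H := Subgroup.subset_closure (by simp)
    simpa using mul_mem (inv_mem h01) h0123
  refine eq_top_iff.2 fun σ _ => ?_
  have hσ : σ ∈ Submonoid.closure (Set.range fun i : Fin 3 => swap i.castSucc i.succ) := by
    rw [Perm.mclosure_swap_castSucc_succ]; trivial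
  refine (Submonoid.closure_le (S := H.toSubmonoid)).2 ?_ hσ
  rintro _ ⟨i, rfl⟩
  fin_cases i
  exacts [h01, h12, h23]

theorem avoid_231_312_321_1243_symm4 (n : ℕ) (hn : 4 ≤ n) :
    avoidSet n ({⟨3, p231⟩, ⟨3, p312⟩, ⟨3, p321⟩, ⟨4, p1243⟩} :
        Set (Σ k : ℕ, Equiv.Perm (Fin k))) =
      ({1,
        Equiv.swap (⟨0, by omega⟩ : Fin n) (⟨1, by omega⟩ : Fin n),
        Equiv.swap (⟨1, by omega⟩ : Fin n) (⟨2, by omega⟩ : Fin n),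
        Equiv.swap (⟨0, by omega⟩ : Fin n) (⟨1, by omega⟩ : Fin n) *
          Equiv.swap (⟨2, by omega⟩ : Fin n) (⟨3, by omega⟩ : Fin n)} :
        Set (Equiv.Perm (Fin n))) ∧
    Nonempty (Subgroup.closure
      (avoidSet n ({⟨3, p231⟩, ⟨3, p312⟩, ⟨3, p321⟩, ⟨4, p1243⟩} :
        Set (Σ k : ℕ, Equiv.Perm (Fin k)))) ≃* Equiv.Perm (Fin 4)) := by
  have hset := avoidSet_eq_image_viaEmbeddingHom hn
  refine ⟨?_, ⟨?_⟩⟩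
  · rw [hset]
    simp only [Set.image_insert_eq, Set.image_singleton, map_one, map_mul,
      Perm.viaEmbeddingHom_swap]
    rfl
  · rw [hset, ← MonoidHom.map_closure, closure_swaps_fin_four_eq_top, ← MonoidHom.range_eq_map]
    exact (MonoidHom.ofInjective (Perm.viaEmbeddingHom_injective _)).symm
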